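/- Let $\tilde p(s,a,y)=(2\pi s)^{-1/2}\exp(-|y-a|^2/(2s))$ be the Gaussian density, and let $p(t,a,y)=\tilde p(v(t),a,y)$ where $v(t)>0$ satisfies $c_1 t\le v(t)\le c_2 t$ for constants $0<c_1\le c_2$ and all $t\in(0,T]$. Then: (a) $p(t,a,y)\le C t^{-1/2}$ for all $t\in(0,T]$ and $a,y\in\mathbb R$, with $C$ depending only on $c_1$; (b) for any $\delta\in(0,1/2)$, $a\in\mathbb R$, and measurable $f,g:[0,T]\to\mathbb R$ with $\|f-g\|_{L^\infty}<\delta$, one has $\int_0^T|p(t,a,f(t))-p(t,a,g(t))|\,dt\le C'\delta\log(1/\delta)$, with $C'$ depending only on $c_1,c_2,T$. -/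

import Mathlib

/-!
(a) The exponential factor is at most `1` and `v t ≥ c₁ t`.

(b) Split `(0, T]` at `s = min δ² T`. On `(0, s]` bound the integrand by (a); it integrates
to `O(√s) = O(δ)`. On `(s, T]` use that `y ↦ p(t,a,y)` is `1 / v t`-Lipschitz: with
`u = (y-a)² / v t` one has `(p · |y-a|)² = u e^{-u} / (2π) ≤ 1`, so
`|∂_y p| = p |y-a| / v t ≤ 1 / v t`. The integrand is then at most `δ / (c₁ t)`, which
integrates to `δ / c₁ · log (T / s) = O(δ log (1/δ))`.
-/

open MeasureTheory Real Set

/-- The Gaussian density at time `t` with mean `a` and variance `v t`: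
`p(t,a,y) = (2π v(t))^{-1/2} exp(-(y-a)²/(2 v(t)))`. -/
noncomputable def gaussp (v : ℝ → ℝ) (t a y : ℝ) : ℝ :=
  (2 * Real.pi * v t) ^ (-(1 : ℝ) / 2) * Real.exp (-((y - a) ^ 2 / (2 * v t)))

section

variable {v : ℝ → ℝ} {t : ℝ}

lemma gaussp_nonneg (hv : 0 < v t) (a y : ℝ) : 0 ≤ gaussp v t a y := by
  unfold gaussp; positivity

lemma gaussp_le_rpow {c : ℝ} (hc : 0 < c) (ht : 0 < t) (hv : c * t ≤ v t) (a y : ℝ) :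
    gaussp v t a y ≤ c ^ (-(1 : ℝ) / 2) * t ^ (-(1 : ℝ) / 2) := by
  have hct : 0 < c * t := mul_pos hc ht
  have hvt : 0 < v t := hct.trans_le hv
  rw [← mul_rpow hc.le ht.le]
  calc gaussp v t a y ≤ (2 * π * v t) ^ (-(1 : ℝ) / 2) * 1 := by
        unfold gaussp
        gcongr
        rw [exp_le_one_iff, neg_nonpos]
        positivity
    _ ≤ (c * t) ^ (-(1 : ℝ) / 2) := by
        rw [mul_one]
        exact rpow_le_rpow_of_nonpos hct (by nlinarith [pi_gt_three]) (by norm_num)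

lemma gaussp_sq (hv : 0 < v t) (a y : ℝ) :
    gaussp v t a y ^ 2 = (2 * π * v t)⁻¹ * exp (-((y - a) ^ 2 / v t)) := by
  unfold gaussp
  rw [mul_pow, ← rpow_mul_natCast (by positivity), ← exp_nat_mul]
  norm_num [rpow_neg_one]
  field_simp
  simp

lemma hasDerivAt_gaussp (a y : ℝ) :
    HasDerivAt (gaussp v t a) (gaussp v t a y * (-(y - a) / v t)) y := by
  have h := ((((hasDerivAt_id' y).sub_const a).fun_pow 2).div_const (2 * v t)).fun_neg.exp
  refine (h.const_mul ((2 * π * v t) ^ (-(1 : ℝ) / 2))).congr_deriv ?_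
  simp only [gaussp]
  ring

lemma mul_exp_neg_le_one (u : ℝ) : u * exp (-u) ≤ 1 := by
  calc u * exp (-u) ≤ exp u * exp (-u) := by
        gcongr; linarith [add_one_le_exp u]
    _ = 1 := by rw [← exp_add, add_neg_cancel, exp_zero]

lemma gaussp_mul_abs_sub_le_one (hv : 0 < v t) (a y : ℝ) : gaussp v t a y * |y - a| ≤ 1 := by
  rw [← pow_le_one_iff_of_nonneg (mul_nonneg (gaussp_nonneg hv a y) (abs_nonneg _)) two_ne_zero,
    mul_pow, gaussp_sq hv, sq_abs]
  have hu := mul_exp_neg_le_one ((y - a) ^ 2 / v t)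
  calc (2 * π * v t)⁻¹ * exp (-((y - a) ^ 2 / v t)) * (y - a) ^ 2
      = (2 * π)⁻¹ * ((y - a) ^ 2 / v t * exp (-((y - a) ^ 2 / v t))) := by
        field_simp
    _ ≤ 1 := by
        rw [inv_mul_le_iff₀ (by positivity), mul_one]
        linarith [pi_gt_three]

lemma abs_gaussp_sub_le (hv : 0 < v t) (a y z : ℝ) :
    |gaussp v t a y - gaussp v t a z| ≤ |y - z| / v t := by
  have hderiv (w : ℝ) : ‖gaussp v t a w * (-(w - a) / v t)‖ ≤ 1 / v t := by
    rw [norm_mul, norm_div, norm_neg, Real.norm_of_nonneg (gaussp_nonneg hv a w),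
      Real.norm_eq_abs, Real.norm_of_nonneg hv.le, ← mul_div_assoc]
    gcongr
    exact gaussp_mul_abs_sub_le_one hv a w
  have := convex_univ.norm_image_sub_le_of_norm_hasDerivWithin_le
    (fun w _ => (hasDerivAt_gaussp a w).hasDerivWithinAt) (fun w _ => hderiv w)
    (mem_univ z) (mem_univ y)
  rwa [Real.norm_eq_abs, Real.norm_eq_abs, one_div_mul_eq_div] at this

lemma integral_rpow_neg_half (s : ℝ) :
    ∫ t in (0 : ℝ)..s, t ^ (-(1 : ℝ) / 2) = 2 * √s := by
  rw [integral_rpow (Or.inl (by norm_num)), zero_rpow (by norm_num), sqrt_eq_rpow]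
  norm_num
  ring

lemma setIntegral_Ioc_le_of_le_rpow_of_le_div {h : ℝ → ℝ} {K B s T : ℝ} (hs : 0 < s)
    (hsT : s ≤ T) (h0 : ∀ t ∈ Ioc 0 T, 0 ≤ h t)
    (hK : ∀ t ∈ Ioc 0 T, h t ≤ K * t ^ (-(1 : ℝ) / 2)) (hB : ∀ t ∈ Ioc 0 T, h t ≤ B / t) :
    ∫ t in Ioc 0 T, h t ≤ 2 * K * √s + B * log (T / s) := by
  set G : ℝ → ℝ := fun t => if t ≤ s then K * t ^ (-(1 : ℝ) / 2) else B / t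
  have hG₁ : EqOn G (fun t => K * t ^ (-(1 : ℝ) / 2)) (Ioc 0 s) := fun t ht => if_pos ht.2
  have hG₂ : EqOn G (fun t => B / t) (Ioc s T) := fun t ht => if_neg (not_le.2 ht.1)
  have hint₁ : IntegrableOn G (Ioc 0 s) :=
    ((intervalIntegral.intervalIntegrable_rpow' (by norm_num)).const_mul K).1.congr_fun hG₁.symm
      measurableSet_Ioc
  have hint₂ : IntegrableOn G (Ioc s T) :=
    ((continuousOn_const.div continuousOn_id fun t ht => (hs.trans_le ht.1).ne').integrableOn_Icc
      |>.mono_set Ioc_subset_Icc_self).congr_fun hG₂.symm measurableSet_Ioc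
  have hunion : Ioc 0 s ∪ Ioc s T = Ioc 0 T := Ioc_union_Ioc_eq_Ioc hs.le hsT
  have hle : ∀ t ∈ Ioc 0 T, h t ≤ G t := fun t ht => by
    by_cases hts : t ≤ s
    · simpa [G, hts] using hK t ht
    · simpa [G, hts] using hB t ht
  calc ∫ t in Ioc 0 T, h t ≤ ∫ t in Ioc 0 T, G t :=
        integral_mono_of_nonneg ((ae_restrict_iff' measurableSet_Ioc).2 (.of_forall h0))
          (hunion ▸ hint₁.union hint₂) ((ae_restrict_iff' measurableSet_Ioc).2 (.of_forall hle))
    _ = (∫ t in Ioc 0 s, G t) + ∫ t in Ioc s T, G t := by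
        rw [← hunion, setIntegral_union (Ioc_disjoint_Ioc_of_le le_rfl) measurableSet_Ioc
          hint₁ hint₂]
    _ = 2 * K * √s + B * log (T / s) := by
        rw [setIntegral_congr_fun measurableSet_Ioc hG₁,
          setIntegral_congr_fun measurableSet_Ioc hG₂, ← intervalIntegral.integral_of_le hs.le,
          ← intervalIntegral.integral_of_le hsT]
        simp_rw [div_eq_mul_inv B]
        rw [intervalIntegral.integral_const_mul, intervalIntegral.integral_const_mul,
          integral_rpow_neg_half, integral_inv_of_pos hs (hs.trans_le hsT)]
        ring

lemma abs_gaussp_sub_le_div {c δ : ℝ} (hc : 0 < c) (ht : 0 < t) (hv : c * t ≤ v t) {a y z : ℝ}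
    (hyz : |y - z| ≤ δ) : |gaussp v t a y - gaussp v t a z| ≤ δ / c / t := by
  have hct : 0 < c * t := mul_pos hc ht
  have hδ : 0 ≤ δ := (abs_nonneg _).trans hyz
  calc |gaussp v t a y - gaussp v t a z| ≤ |y - z| / v t :=
        abs_gaussp_sub_le (hct.trans_le hv) a y z
    _ ≤ δ / (c * t) := by gcongr
    _ = δ / c / t := (div_div δ c t).symm

lemma log_div_min_sq_le {δ T : ℝ} (hδ : 0 < δ) (hδ1 : δ ≤ 1) (hT : 0 < T) :
    log (T / min (δ ^ 2) T) ≤ max (log T) 0 + 2 * log (1 / δ) := by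
  have hL : 0 ≤ log (1 / δ) := log_nonneg (one_le_one_div hδ hδ1)
  rcases min_cases (δ ^ 2) T with ⟨hmin, -⟩ | ⟨hmin, -⟩
  · rw [hmin, log_div hT.ne' (by positivity), log_pow, one_div, log_inv]
    push_cast
    linarith [le_max_left (log T) 0]
  · rw [hmin, div_self hT.ne', log_one]
    linarith [le_max_right (log T) 0]

lemma le_mul_log_one_div_div_log_two {δ : ℝ} (hδ : 0 < δ) (hδ2 : δ ≤ 1 / 2) :
    δ ≤ δ * log (1 / δ) / log 2 := by
  rw [le_div_iff₀ (log_pos one_lt_two)]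
  gcongr
  rw [le_div_iff₀ hδ]
  linarith

lemma integral_abs_gaussp_sub_le {c T δ : ℝ} (hc : 0 < c) (hT : 0 < T)
    (hv : ∀ t ∈ Ioc 0 T, c * t ≤ v t) (hδ : 0 < δ) (hδ2 : δ ≤ 1 / 2) (a : ℝ) {f g : ℝ → ℝ}
    (hfg : ∀ t ∈ Ioc 0 T, |f t - g t| ≤ δ) :
    ∫ t in Ioc 0 T, |gaussp v t a (f t) - gaussp v t a (g t)| ≤
      ((2 * c ^ (-(1 : ℝ) / 2) + max (log T) 0 / c) / log 2 + 2 / c) * δ * log (1 / δ) := by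
  set K := c ^ (-(1 : ℝ) / 2)
  set M := max (log T) 0
  set L := log (1 / δ)
  set s := min (δ ^ 2) T
  have hs : 0 < s := lt_min (by positivity) hT
  have hsδ : √s ≤ δ := (sqrt_le_sqrt (min_le_left _ _)).trans_eq (sqrt_sq hδ.le)
  have hp (t : ℝ) (ht : t ∈ Ioc 0 T) : 0 < v t := (mul_pos hc ht.1).trans_le (hv t ht)
  have hint := setIntegral_Ioc_le_of_le_rpow_of_le_div
    (h := fun t => |gaussp v t a (f t) - gaussp v t a (g t)|) (K := K) (B := δ / c) hs
    (min_le_right _ _) (fun t _ => abs_nonneg _)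
    (fun t ht => abs_sub_le_of_nonneg_of_le (gaussp_nonneg (hp t ht) _ _)
      (gaussp_le_rpow hc ht.1 (hv t ht) _ _) (gaussp_nonneg (hp t ht) _ _)
      (gaussp_le_rpow hc ht.1 (hv t ht) _ _))
    (fun t ht => abs_gaussp_sub_le_div hc ht.1 (hv t ht) (hfg t ht))
  calc _ ≤ 2 * K * √s + δ / c * log (T / s) := hint
    _ ≤ 2 * K * δ + δ / c * (M + 2 * L) := by
        gcongr
        exact log_div_min_sq_le hδ (by linarith) hT
    _ = (2 * K + M / c) * δ + 2 / c * δ * L := by ring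
    _ ≤ (2 * K + M / c) * (δ * L / log 2) + 2 / c * δ * L := by
        gcongr
        exact le_mul_log_one_div_div_log_two hδ hδ2
    _ = ((2 * K + M / c) / log 2 + 2 / c) * δ * L := by ring

end

theorem stmt7_general (c1 c2 : ℝ) (hc1 : 0 < c1) :
    (∃ C > 0, ∀ T > 0, ∀ v : ℝ → ℝ,
      (∀ t ∈ Set.Ioc (0 : ℝ) T, c1 * t ≤ v t ∧ v t ≤ c2 * t) →
      ∀ t ∈ Set.Ioc (0 : ℝ) T, ∀ a y : ℝ,
        gaussp v t a y ≤ C * t ^ (-(1 : ℝ) / 2)) ∧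
    (∀ T > 0, ∃ C' > 0, ∀ v : ℝ → ℝ, Measurable v →
      (∀ t ∈ Set.Ioc (0 : ℝ) T, c1 * t ≤ v t ∧ v t ≤ c2 * t) →
      ∀ δ ∈ Set.Ioo (0 : ℝ) (1 / 2), ∀ a : ℝ, ∀ f g : ℝ → ℝ,
        Measurable f → Measurable g →
        (∀ t ∈ Set.Icc (0 : ℝ) T, |f t - g t| < δ) →
        ∫ t in Set.Ioc (0 : ℝ) T, |gaussp v t a (f t) - gaussp v t a (g t)| ≤
          C' * δ * Real.log (1 / δ)) := by
  refine ⟨⟨c1 ^ (-(1 : ℝ) / 2), by positivity, fun T _ v hv t ht a y =>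
    gaussp_le_rpow hc1 ht.1 (hv t ht).1 a y⟩, fun T hT => ?_⟩
  refine ⟨(2 * c1 ^ (-(1 : ℝ) / 2) + max (log T) 0 / c1) / log 2 + 2 / c1, by positivity, ?_⟩
  intro v _ hv δ hδ a f g _ _ hfg
  exact integral_abs_gaussp_sub_le hc1 hT (fun t ht => (hv t ht).1) hδ.1 hδ.2.le a
    (fun t ht => (hfg t (Ioc_subset_Icc_self ht)).le)

/-- Bounds for the Gaussian density with variance `v(t) ≍ t`:
(a) `p(t,a,y) ≤ C t^{-1/2}` with `C` depending only on `c₁`;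
(b) `∫₀ᵀ |p(t,a,f(t)) - p(t,a,g(t))| dt ≤ C' δ log(1/δ)` when `‖f-g‖_∞ < δ < 1/2`,
with `C'` depending only on `c₁, c₂, T`. -/
theorem stmt7 (c1 c2 : ℝ) (hc1 : 0 < c1) (hc12 : c1 ≤ c2) :
    (∃ C > 0, ∀ T > 0, ∀ v : ℝ → ℝ,
      (∀ t ∈ Set.Ioc (0 : ℝ) T, c1 * t ≤ v t ∧ v t ≤ c2 * t) →
      ∀ t ∈ Set.Ioc (0 : ℝ) T, ∀ a y : ℝ,
        gaussp v t a y ≤ C * t ^ (-(1 : ℝ) / 2)) ∧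
    (∀ T > 0, ∃ C' > 0, ∀ v : ℝ → ℝ, Measurable v →
      (∀ t ∈ Set.Ioc (0 : ℝ) T, c1 * t ≤ v t ∧ v t ≤ c2 * t) →
      ∀ δ ∈ Set.Ioo (0 : ℝ) (1 / 2), ∀ a : ℝ, ∀ f g : ℝ → ℝ,
        Measurable f → Measurable g →
        (∀ t ∈ Set.Icc (0 : ℝ) T, |f t - g t| < δ) →
        ∫ t in Set.Ioc (0 : ℝ) T, |gaussp v t a (f t) - gaussp v t a (g t)| ≤
          C' * δ * Real.log (1 / δ)) :=
  stmt7_general c1 c2 hc1
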